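/- arXiv:1805.03240 — 2 statements merged into one kernel-verified Lean document; each statement's English description precedes it below -/
import Mathlib

section
/- For any m ∈ [0,1) and any positive integer q, the quantity Kurt(q, m) = (2·3^q / (1 − m^q)^2)·[1 + 2·((1+2m)m/3)^q + ((1+2m)/3)^q − 4 m^q] − 8 is nonnegative, and equals 0 when q = 1. -/
/-- The Mardia kurtosis of the Hadamard product of `q` independent mean-zero bivariate
normals with squared correlation `m = ρ²`. -/
noncomputable def Kurt (q : ℕ) (m : ℝ) : ℝ :=
  (2 * 3 ^ q / (1 - m ^ q) ^ 2) *
    (1 + 2 * ((1 + 2 * m) * m / 3) ^ q + ((1 + 2 * m) / 3) ^ q - 4 * m ^ q) - 8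

/-!
Clearing denominators, `Kurt q m = 2 N_q(m) / (1 - m^q)^2` with `N_1 = 0`. The power-mean
inequality `((1 + 2m)/3)^(n+1) ≤ (1 + 2 m^(n+1))/3` together with `3^n ≥ 3` bounds
`N_{n+1} - (1 + 2m) N_n` from below by twice a quadratic in `m^n` whose discriminant is
`-(1 - m)^2 (16 m + 23) ≤ 0`, so `N_q ≥ 0` by induction on `q`.
-/

def kurtNumerator (q : ℕ) (m : ℝ) : ℝ :=
  3 ^ q * (1 - 4 * m ^ q) + (1 + 2 * m) ^ q * (1 + 2 * m ^ q) - 4 * (1 - m ^ q) ^ 2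

def kurtRemainder (m z : ℝ) : ℝ :=
  (3 + m) - (1 + 7 * m) * z + (2 - 2 * m + 4 * m ^ 2) * z ^ 2

section

variable {m : ℝ}

theorem Kurt_eq_kurtNumerator_div {q : ℕ} (hq : m ^ q ≠ 1) :
    Kurt q m = 2 * kurtNumerator q m / (1 - m ^ q) ^ 2 := by
  have : 1 - m ^ q ≠ 0 := sub_ne_zero.2 hq.symm
  rw [Kurt, kurtNumerator, div_pow, mul_pow, div_pow]
  field_simp
  ring

theorem kurtNumerator_one (m : ℝ) : kurtNumerator 1 m = 0 := by
  rw [kurtNumerator]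
  ring

theorem kurtNumerator_succ (n : ℕ) (m : ℝ) :
    kurtNumerator (n + 1) m = (1 + 2 * m) * kurtNumerator n m
      + 2 * (1 - m) * (3 ^ n * (1 + 2 * m ^ n) - (1 + 2 * m) ^ (n + 1) * m ^ n)
      + 8 * m - 8 * (1 + m) * m ^ n + 4 * (1 + 2 * m - m ^ 2) * (m ^ n) ^ 2 := by
  rw [kurtNumerator, kurtNumerator]
  ring

theorem three_mul_one_add_two_mul_pow_le (hm : 0 ≤ m) (n : ℕ) :
    3 * (1 + 2 * m) ^ n ≤ 3 ^ n * (1 + 2 * m ^ n) := by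
  have h := (convexOn_pow n).2 (Set.mem_Ici.2 zero_le_one) (Set.mem_Ici.2 hm)
    (by norm_num : (0 : ℝ) ≤ 1 / 3) (by norm_num : (0 : ℝ) ≤ 2 / 3) (by norm_num)
  simp only [smul_eq_mul, one_pow, mul_one] at h
  calc 3 * (1 + 2 * m) ^ n = 3 * 3 ^ n * (1 / 3 + 2 / 3 * m) ^ n := by
        rw [mul_assoc, ← mul_pow]; ring
    _ ≤ 3 * 3 ^ n * (1 / 3 + 2 / 3 * m ^ n) := by gcongr
    _ = 3 ^ n * (1 + 2 * m ^ n) := by ring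

theorem kurtRemainder_nonneg (hm : 0 ≤ m) (z : ℝ) : 0 ≤ kurtRemainder m z := by
  have ha : 0 < 2 - 2 * m + 4 * m ^ 2 := by nlinarith [sq_nonneg (2 * m - 1 / 2)]
  have hsq : 4 * (2 - 2 * m + 4 * m ^ 2) * kurtRemainder m z =
      (2 * (2 - 2 * m + 4 * m ^ 2) * z - (1 + 7 * m)) ^ 2 + (1 - m) ^ 2 * (16 * m + 23) := by
    rw [kurtRemainder]
    ring
  have : 0 ≤ 4 * (2 - 2 * m + 4 * m ^ 2) * kurtRemainder m z := by
    rw [hsq]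
    positivity
  exact nonneg_of_mul_nonneg_right this (by positivity)

theorem kurtNumerator_succ_ge (hm₀ : 0 ≤ m) (hm₁ : m ≤ 1) {n : ℕ} (hn : 1 ≤ n) :
    (1 + 2 * m) * kurtNumerator n m + 2 * kurtRemainder m (m ^ n) ≤
      kurtNumerator (n + 1) m := by
  set z := m ^ n
  have hz₀ : 0 ≤ z := pow_nonneg hm₀ n
  have hz₁ : z ≤ 1 := pow_le_one₀ hm₀ hm₁
  have h3n : (3 : ℝ) ≤ 3 ^ n := le_self_pow₀ (by norm_num) (by omega)
  have hmean : (1 + 2 * m) ^ (n + 1) ≤ 3 ^ n * (1 + 2 * m * z) := by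
    have := three_mul_one_add_two_mul_pow_le hm₀ (n + 1)
    rw [pow_succ 3, pow_succ m] at this
    nlinarith
  have hgap : 3 * (1 + z - 2 * m * z ^ 2) ≤
      3 ^ n * (1 + 2 * z) - (1 + 2 * m) ^ (n + 1) * z := by
    have hpos : 0 ≤ 1 + z - 2 * m * z ^ 2 := by nlinarith [mul_le_mul hm₁ hz₁ hz₀ zero_le_one]
    nlinarith [mul_le_mul_of_nonneg_right hmean hz₀, mul_le_mul_of_nonneg_right h3n hpos]
  rw [kurtNumerator_succ, kurtRemainder]
  nlinarith [mul_le_mul_of_nonneg_left hgap (by linarith : 0 ≤ 2 * (1 - m))]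

theorem kurtNumerator_nonneg (hm₀ : 0 ≤ m) (hm₁ : m ≤ 1) {q : ℕ} (hq : 1 ≤ q) :
    0 ≤ kurtNumerator q m := by
  induction q, hq using Nat.le_induction with
  | base => rw [kurtNumerator_one]
  | succ n hn ih =>
    linarith [mul_nonneg (by linarith : (0 : ℝ) ≤ 1 + 2 * m) ih,
      kurtRemainder_nonneg hm₀ (m ^ n), kurtNumerator_succ_ge hm₀ hm₁ hn]

end

/-- For any `m ∈ [0,1)` and positive integer `q`, `Kurt (q, m)` is nonnegative,
and it equals `0` when `q = 1`. -/
theorem Kurt_nonneg_and_eq_zero_at_one (m : ℝ) (hm : m ∈ Set.Ico (0 : ℝ) 1) :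
    (∀ q : ℕ, 1 ≤ q → 0 ≤ Kurt q m) ∧ Kurt 1 m = 0 := by
  obtain ⟨hm₀, hm₁⟩ := hm
  have hpow {q : ℕ} (hq : 1 ≤ q) : m ^ q < 1 := pow_lt_one₀ hm₀ hm₁ (by omega)
  refine ⟨fun q hq => ?_, ?_⟩
  · rw [Kurt_eq_kurtNumerator_div (hpow hq).ne]
    have := kurtNumerator_nonneg hm₀ hm₁.le hq
    positivity
  · rw [Kurt_eq_kurtNumerator_div (hpow le_rfl).ne, kurtNumerator_one]
    simp
end

section
/- For 0 ≤ m < 1, the function q ↦ 1 − m^q is increasing in q, and hence 1/(1 − m^q)^2 is decreasing in q; nevertheless 3^q grows fast enough that (2·3^q/(1−m^q)^2)·[1 + 2((1+2m)m/3)^q + ((1+2m)/3)^q − 4m^q] is increasing in q. In particular, for m = 0 this quantity reduces to 2·3^q·(1 + 3^{−q}) = 2·3^q + 2, which is increasing in q. -/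
/-!
Write `a = m ^ q` and `N q = 3 ^ q (1 - 4a) + (1 + 2m) ^ q (1 + 2a)`, so that the factor is
`2 N q / (1 - a) ^ 2`. Clearing denominators, the step from `q` to `q + 1` becomes
`0 ≤ 3 ^ q P(m, a) + (1 + 2m) ^ q Q(m, a)` for two explicit polynomials `P`, `Q`. If `Q ≤ 0` this
follows from `P + Q ≥ 0` (valid for `a ≤ m ²`, i.e. `q ≥ 2`) and `(1 + 2m) ^ q ≤ 3 ^ q`. If
`P < 0 < Q` it follows from `-P / Q ≤ (4a - 1) / (1 + 2a) ≤ a ^ (2/3) ≤ ((1 + 2m) / 3) ^ q`, the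
last step being `27 m ² ≤ (1 + 2m) ³`. The step from `q = 1` is a polynomial inequality in `m`.
-/

noncomputable def kurtosisFactor (m : ℝ) (q : ℕ) : ℝ :=
  (2 * 3 ^ q / (1 - m ^ q) ^ 2) *
    (1 + 2 * ((1 + 2 * m) * m / 3) ^ q + ((1 + 2 * m) / 3) ^ q - 4 * m ^ q)

lemma kurtosisFactor_eq_div (m : ℝ) (q : ℕ) :
    kurtosisFactor m q =
      2 * (3 ^ q * (1 - 4 * m ^ q) + (1 + 2 * m) ^ q * (1 + 2 * m ^ q)) / (1 - m ^ q) ^ 2 := by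
  have h3 : (3 : ℝ) ^ q ≠ 0 := by positivity
  rw [kurtosisFactor, div_pow, mul_pow, div_pow]
  field_simp
  ring

/-- With `a = m ^ q`,
`N (q + 1) (1 - a) ^ 2 - N q (1 - m a) ^ 2 = 3 ^ q stepP m a + (1 + 2m) ^ q stepQ m a`. -/
def stepP (m a : ℝ) : ℝ := 3 * (1 - a) ^ 2 * (1 - 4 * m * a) - (1 - m * a) ^ 2 * (1 - 4 * a)

def stepQ (m a : ℝ) : ℝ :=
  (1 + 2 * m) * (1 - a) ^ 2 * (1 + 2 * m * a) - (1 - m * a) ^ 2 * (1 + 2 * a)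

section
variable {m a : ℝ}

lemma stepP_add_stepQ_nonneg (hm0 : 0 ≤ m) (hm1 : m ≤ 1) (ha0 : 0 ≤ a) (ham : a ≤ m ^ 2) :
    0 ≤ stepP m a + stepQ m a := by
  have hS : 0 ≤ 1 + m - 2 * a - 4 * m * a + 2 * m ^ 2 * a + 5 * m * a ^ 2 - 3 * m ^ 2 * a ^ 2 := by
    nlinarith [sq_nonneg (1 - m), sq_nonneg (m ^ 2 - a), sq_nonneg (1 - a), mul_nonneg ha0 hm0,
      mul_nonneg (mul_nonneg hm0 ha0) ha0, sq_nonneg (m - a), mul_nonneg hm0 (sub_nonneg.2 ham),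
      mul_nonneg ha0 (sub_nonneg.2 ham), mul_nonneg (sub_nonneg.2 hm1) ha0]
  have ha1 : 0 ≤ 1 - a := by nlinarith
  calc 0 ≤ 2 * (1 - a) *
        (1 + m - 2 * a - 4 * m * a + 2 * m ^ 2 * a + 5 * m * a ^ 2 - 3 * m ^ 2 * a ^ 2) := by
        positivity
    _ = stepP m a + stepQ m a := by unfold stepP stepQ; ring

lemma stepP_mul_add_stepQ_mul_nonneg (hm0 : 0 ≤ m) (hm1 : m ≤ 1) (ha0 : 0 ≤ a) (ha1 : a ≤ 1) :
    0 ≤ (1 + 2 * a) * stepP m a + (4 * a - 1) * stepQ m a := by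
  have hm : 0 ≤ 1 - m := by linarith
  have ha : 0 ≤ 1 - a := by linarith
  unfold stepP stepQ
  linarith [mul_nonneg (mul_nonneg (pow_nonneg ha0 2) (pow_nonneg hm 3)) (pow_nonneg ha 3),
    mul_nonneg (mul_nonneg hm0 (pow_nonneg hm 2)) (pow_nonneg ha 5),
    mul_nonneg (mul_nonneg (pow_nonneg ha0 2) (pow_nonneg hm 2)) (pow_nonneg ha 2),
    mul_nonneg (mul_nonneg ha0 hm) (pow_nonneg ha 3),
    mul_nonneg (mul_nonneg (pow_nonneg hm0 2) hm) (pow_nonneg ha 3),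
    mul_nonneg (mul_nonneg (pow_nonneg ha0 3) (pow_nonneg hm 2)) (pow_nonneg ha 2),
    mul_nonneg (pow_nonneg hm 2) (pow_nonneg ha 5),
    mul_nonneg (mul_nonneg hm0 (pow_nonneg hm 2)) (pow_nonneg ha 2),
    mul_nonneg (mul_nonneg (pow_nonneg ha0 3) (pow_nonneg hm 3)) (pow_nonneg ha 2)]

lemma four_mul_sub_one_pow_three_le (ha0 : 0 ≤ a) :
    (4 * a - 1) ^ 3 ≤ a ^ 2 * (1 + 2 * a) ^ 3 := by
  nlinarith [mul_nonneg (pow_nonneg ha0 3) (sq_nonneg (1 - a)),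
    sq_nonneg ((28 * a - 5) * (1 - a)), sq_nonneg (1 - a)]

lemma mul_stepP_add_mul_stepQ_nonneg {x y : ℝ} (hm0 : 0 ≤ m) (hm1 : m ≤ 1) (ha0 : 0 ≤ a)
    (ham : a ≤ m ^ 2) (hx : 0 ≤ x) (hy : 0 ≤ y) (hyx : y ≤ x) (hcube : x ^ 3 * a ^ 2 ≤ y ^ 3) :
    0 ≤ x * stepP m a + y * stepQ m a := by
  have ha1 : a ≤ 1 := by nlinarith
  set P := stepP m a
  set Q := stepQ m a
  rcases le_or_gt Q 0 with hQ | hQ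
  · nlinarith [stepP_add_stepQ_nonneg hm0 hm1 ha0 ham,
      mul_nonneg (sub_nonneg.2 hyx) (neg_nonneg.2 hQ)]
  rcases le_or_gt 0 P with hP | hP
  · exact add_nonneg (mul_nonneg hx hP) (mul_nonneg hy hQ.le)
  have hW := stepP_mul_add_stepQ_mul_nonneg hm0 hm1 ha0 ha1
  have hc : 0 < 1 + 2 * a := by positivity
  have hchain : (-P) * (1 + 2 * a) ≤ Q * (4 * a - 1) := by linarith
  have hcubed : (x * (-P) * (1 + 2 * a)) ^ 3 ≤ (y * Q * (1 + 2 * a)) ^ 3 :=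
    calc (x * (-P) * (1 + 2 * a)) ^ 3 = x ^ 3 * ((-P) * (1 + 2 * a)) ^ 3 := by ring
      _ ≤ x ^ 3 * (Q * (4 * a - 1)) ^ 3 := by gcongr; exact mul_nonneg (by linarith) hc.le
      _ = x ^ 3 * Q ^ 3 * (4 * a - 1) ^ 3 := by ring
      _ ≤ x ^ 3 * Q ^ 3 * (a ^ 2 * (1 + 2 * a) ^ 3) := by
          gcongr; exact four_mul_sub_one_pow_three_le ha0
      _ = x ^ 3 * a ^ 2 * (Q * (1 + 2 * a)) ^ 3 := by ring
      _ ≤ y ^ 3 * (Q * (1 + 2 * a)) ^ 3 := by gcongr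
      _ = (y * Q * (1 + 2 * a)) ^ 3 := by ring
  have hroot := le_of_pow_le_pow_left₀ three_ne_zero (by positivity) hcubed
  nlinarith

lemma three_mul_stepP_add_stepQ_nonneg (hm0 : 0 ≤ m) (hm1 : m ≤ 1) :
    0 ≤ 3 * stepP m m + (1 + 2 * m) * stepQ m m := by
  have hm : 0 ≤ 1 - m := by linarith
  unfold stepP stepQ
  nlinarith [mul_nonneg (pow_nonneg hm0 3) (pow_nonneg hm 4), pow_nonneg hm 5,
    mul_nonneg hm0 (pow_nonneg hm 6), mul_nonneg (pow_nonneg hm0 2) (pow_nonneg hm 5)]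

end

lemma kurtosisFactor_le_succ {m : ℝ} (hm : m ∈ Set.Ico (0 : ℝ) 1) {q : ℕ} (hq : 1 ≤ q) :
    kurtosisFactor m q ≤ kurtosisFactor m (q + 1) := by
  obtain ⟨hm0, hm1⟩ := hm
  have key : 0 ≤ 3 ^ q * stepP m (m ^ q) + (1 + 2 * m) ^ q * stepQ m (m ^ q) := by
    obtain rfl | hq2 := hq.eq_or_lt
    · simpa using three_mul_stepP_add_stepQ_nonneg hm0 hm1.le
    apply mul_stepP_add_mul_stepQ_nonneg hm0 hm1.le (by positivity)
      (pow_le_pow_of_le_one hm0 hm1.le hq2) (by positivity) (by positivity)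
      (pow_le_pow_left₀ (by linarith) (by linarith) q)
    calc (3 ^ q) ^ 3 * (m ^ q) ^ 2 = (3 ^ 3 * m ^ 2 : ℝ) ^ q := by
          rw [pow_right_comm (3 : ℝ), pow_right_comm m, mul_pow]
      _ ≤ ((1 + 2 * m) ^ 3) ^ q := by gcongr; nlinarith [sq_nonneg (1 - m)]
      _ = ((1 + 2 * m) ^ q) ^ 3 := pow_right_comm _ _ _
  have hd (n : ℕ) (hn : 1 ≤ n) : 0 < 1 - m ^ n := by
    linarith [pow_lt_one₀ hm0 hm1 (by omega : n ≠ 0)]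
  rw [kurtosisFactor_eq_div, kurtosisFactor_eq_div,
    div_le_div_iff₀ (pow_pos (hd q hq) 2) (pow_pos (hd (q + 1) (by omega)) 2)]
  unfold stepP stepQ at key
  rw [pow_succ, pow_succ, pow_succ]
  linear_combination 2 * key

lemma kurtosisFactor_monotoneOn {m : ℝ} (hm : m ∈ Set.Ico (0 : ℝ) 1) :
    MonotoneOn (kurtosisFactor m) (Set.Ici 1) :=
  monotoneOn_nat_Ici_of_le_succ fun _ hq => kurtosisFactor_le_succ hm hq

/-- For `0 ≤ m < 1`: `q ↦ 1 − m^q` is increasing in `q`, hence `q ↦ 1/(1 − m^q)²` is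
decreasing in `q`; nevertheless the quantity
`(2·3^q/(1−m^q)²)·[1 + 2((1+2m)m/3)^q + ((1+2m)/3)^q − 4m^q]` is increasing in `q`.
In particular, for `m = 0` it reduces to `2·3^q + 2`. -/
theorem growth_of_kurtosis_factor (m : ℝ) (hm : m ∈ Set.Ico (0 : ℝ) 1) :
    (∀ q₁ q₂ : ℕ, 1 ≤ q₁ → q₁ ≤ q₂ → 1 - m ^ q₁ ≤ 1 - m ^ q₂) ∧
      (∀ q₁ q₂ : ℕ, 1 ≤ q₁ → q₁ ≤ q₂ →
        1 / (1 - m ^ q₂) ^ 2 ≤ 1 / (1 - m ^ q₁) ^ 2) ∧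
      (∀ q₁ q₂ : ℕ, 1 ≤ q₁ → q₁ ≤ q₂ →
        (2 * 3 ^ q₁ / (1 - m ^ q₁) ^ 2) *
            (1 + 2 * ((1 + 2 * m) * m / 3) ^ q₁ + ((1 + 2 * m) / 3) ^ q₁ - 4 * m ^ q₁) ≤
          (2 * 3 ^ q₂ / (1 - m ^ q₂) ^ 2) *
            (1 + 2 * ((1 + 2 * m) * m / 3) ^ q₂ + ((1 + 2 * m) / 3) ^ q₂ - 4 * m ^ q₂)) ∧
      (m = 0 → ∀ q : ℕ, 1 ≤ q →
        (2 * 3 ^ q / (1 - m ^ q) ^ 2) *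
            (1 + 2 * ((1 + 2 * m) * m / 3) ^ q + ((1 + 2 * m) / 3) ^ q - 4 * m ^ q) =
          2 * 3 ^ q + 2) := by
  obtain ⟨hm0, hm1⟩ := hm
  have hanti {q₁ q₂ : ℕ} (h : q₁ ≤ q₂) : m ^ q₂ ≤ m ^ q₁ := pow_le_pow_of_le_one hm0 hm1.le h
  refine ⟨fun q₁ q₂ _ h => by linarith [hanti h], fun q₁ q₂ h₁ h => ?_,
    fun q₁ q₂ h₁ h => kurtosisFactor_monotoneOn ⟨hm0, hm1⟩ h₁ (h₁.trans h) h, ?_⟩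
  · have hd : 0 < 1 - m ^ q₁ := by linarith [pow_lt_one₀ hm0 hm1 (by omega : q₁ ≠ 0)]
    exact one_div_le_one_div_of_le (by positivity)
      (pow_le_pow_left₀ hd.le (by linarith [hanti h]) 2)
  · rintro rfl q hq
    have h3 : (3 : ℝ) ^ q ≠ 0 := by positivity
    simp only [zero_pow (by omega : q ≠ 0), sub_zero, one_pow, div_one, mul_zero, add_zero,
      zero_div, one_div, inv_pow]
    field_simp
end
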